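/- For integers 1 ≤ m ≤ n and an indeterminate λ, the identity sum_{i=m}^{n} sum_{j=m}^{i} (-1)^{m+i} [n,i] C(i,j) {j,m} λ^{i-j} 2^{j-m} = (n!/m!) * (-1)^{m+n} * sum_{ℓ=m}^{n} C(λ, n-ℓ) C(m, ℓ-m) 2^{m-ℓ} holds in ℚ[λ]. -/

import Mathlib

open Finset

/-- Unsigned Stirling numbers of the first kind. -/
def stirling1 : ℕ → ℕ → ℕ
  | 0, 0 => 1
  | 0, _ + 1 => 0
  | _ + 1, 0 => 0
  | n + 1, k + 1 => n * stirling1 n (k + 1) + stirling1 n k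

/-- Stirling numbers of the second kind. -/
def stirling2 : ℕ → ℕ → ℕ
  | 0, 0 => 1
  | 0, _ + 1 => 0
  | _ + 1, 0 => 0
  | n + 1, k + 1 => (k + 1) * stirling2 n (k + 1) + stirling2 n k

/-- Generalized binomial coefficient `C(x, r) = x(x-1)⋯(x-r+1)/r!` in a ℚ-algebra. -/
noncomputable def gchoose {R : Type*} [CommRing R] [Algebra ℚ R] (x : R) (r : ℕ) : R :=
  algebraMap ℚ R ((r.factorial : ℚ)⁻¹) * ∏ i ∈ Finset.range r, (x - i)

/-!
Both sides are `(-1)^(m+n) n! / (2^m m!)` times the `m`-th forward difference at `0` of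
`x ↦ C(2x + λ, n)`.

On the left, `m! {j, m}` is the `m`-th difference of `x ↦ x^j` at `0`, so the sum over `j` is
`Δ^m (2x + λ)^i / m!`, and the signed Stirling numbers of the first kind turn `(2x + λ)^i` into
the falling factorial `(2x + λ)(2x + λ - 1)⋯(2x + λ - n + 1) = n! C(2x + λ, n)`.

On the right, Vandermonde gives `C(2x + λ, n) = ∑ C(2x, s) C(λ, n - s)`, and
`∑ₖ (-1)^(m-k) C(m, k) C(2k, s)` is the coefficient of `X^s` in
`((X + 1)^2 - 1)^m = X^m (X + 2)^m`, that is `2^(2m-s) C(m, s - m)`.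
-/

open Polynomial fwdDiff

theorem stirling1_eq_stirlingFirst : stirling1 = Nat.stirlingFirst := by
  funext n k
  induction n generalizing k <;> cases k <;> simp [stirling1, Nat.stirlingFirst, *]

theorem stirling2_eq_stirlingSecond : stirling2 = Nat.stirlingSecond := by
  funext n k
  induction n generalizing k <;> cases k <;> simp [stirling2, Nat.stirlingSecond, *]

theorem fwdDiff_iter_apply_add_self {M G : Type*} [AddCommMonoid M] [AddCommGroup G] (h : M)
    (f : M → G) (n : ℕ) (y : M) :
    Δ_[h] ^[n] f (y + h) = Δ_[h] ^[n] f y + Δ_[h] ^[n + 1] f y := by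
  rw [Function.iterate_succ_apply', fwdDiff, add_sub_cancel]

theorem fwdDiff_iter_succ_id_mul_zero {R : Type*} [CommRing R] (f : R → R) (n : ℕ) :
    Δ_[1] ^[n + 1] (fun x ↦ x * f x) 0 = (n + 1) * Δ_[1] ^[n] f 1 := by
  rw [fwdDiff_iter_eq_sum_shift, fwdDiff_iter_eq_sum_shift, sum_range_succ', mul_sum]
  simp only [nsmul_eq_mul, Nat.cast_zero, zero_mul, smul_zero, add_zero, zsmul_eq_mul]
  refine sum_congr rfl fun k _ ↦ ?_
  have h := congrArg (Nat.cast : ℕ → R) (Nat.add_one_mul_choose_eq n k)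
  push_cast at h ⊢
  rw [zero_add, mul_one, mul_one, add_comm 1 (k : R)]
  linear_combination -(-1 : R) ^ (n - k) * f (k + 1) * h

namespace Nat

theorem coeff_ascPochhammer_eq_stirlingFirst (n k : ℕ) :
    (ascPochhammer ℕ n).coeff k = stirlingFirst n k := by
  induction n generalizing k with
  | zero => cases k <;> simp [stirlingFirst_zero, stirlingFirst_zero_succ, coeff_one]
  | succ n ih =>
    cases k with
    | zero => rw [coeff_zero_eq_eval_zero, ascPochhammer_eval_zero, stirlingFirst_succ_zero]; simp
    | succ k =>
      rw [ascPochhammer_succ_right, mul_add, coeff_add, coeff_mul_X, coeff_mul_natCast, ih, ih,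
        stirlingFirst_succ_succ, Nat.cast_id]
      ring

theorem ascPochhammer_eval_eq_sum_stirlingFirst {R : Type*} [CommSemiring R] (n : ℕ) (x : R) :
    (ascPochhammer R n).eval x = ∑ i ∈ range (n + 1), (stirlingFirst n i : R) * x ^ i := by
  rw [← ascPochhammer_map (Nat.castRingHom R), eval_map, eval₂_eq_sum_range,
    ascPochhammer_natDegree]
  simp only [coeff_ascPochhammer_eq_stirlingFirst, eq_natCast]

theorem descPochhammer_eval_eq_sum_stirlingFirst {R : Type*} [CommRing R] (n : ℕ) (x : R) :
    (descPochhammer R n).eval x =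
      ∑ i ∈ range (n + 1), (-1) ^ (n + i) * (stirlingFirst n i : R) * x ^ i := by
  have h := ascPochhammer_eval_neg_eq_descPochhammer (R := R) x n
  rw [ascPochhammer_eval_eq_sum_stirlingFirst] at h
  calc (descPochhammer R n).eval x = (-1) ^ n * ((-1) ^ n * (descPochhammer R n).eval x) := by
        rw [← mul_assoc, ← mul_pow]; simp
    _ = _ := by
      rw [← h, mul_sum]
      exact sum_congr rfl fun i _ ↦ by rw [neg_pow, _root_.pow_add]; ring

theorem factorial_mul_stirlingSecond_eq_fwdDiff_iter {R : Type*} [CommRing R] (j m : ℕ) :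
    (m.factorial * stirlingSecond j m : R) = Δ_[1] ^[m] (fun x : R ↦ x ^ j) 0 := by
  induction j generalizing m with
  | zero =>
    cases m with
    | zero => simp [stirlingSecond_zero]
    | succ m =>
      simp_rw [Function.iterate_succ_apply, _root_.pow_zero, fwdDiff_const]
      rw [Function.iterate_fixed (fwdDiff_const _ _)]
      simp [stirlingSecond_zero_succ]
  | succ j ih =>
    cases m with
    | zero => rw [stirlingSecond_succ_zero]; simp
    | succ m =>
      have h1 := fwdDiff_iter_apply_add_self (1 : R) (fun x ↦ x ^ j) m 0
      rw [zero_add] at h1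
      simp only [_root_.pow_succ']
      rw [fwdDiff_iter_succ_id_mul_zero, h1, ← ih, ← ih, stirlingSecond_succ_succ, factorial_succ]
      push_cast
      ring

end Nat

theorem factorial_mul_sum_stirlingFirst_stirlingSecond_eq_fwdDiff_iter {R : Type*} [CommRing R]
    (n m : ℕ) (a b : R) :
    m.factorial * ∑ i ∈ range (n + 1), ∑ j ∈ range (i + 1), (-1) ^ (n + i) *
        (Nat.stirlingFirst n i * i.choose j * Nat.stirlingSecond j m : R) * a ^ j * b ^ (i - j) =
      Δ_[1] ^[m] (fun x ↦ (descPochhammer R n).eval (a * x + b)) 0 := by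
  simp only [fwdDiff_iter_eq_sum_shift, Nat.descPochhammer_eval_eq_sum_stirlingFirst, add_pow,
    zsmul_eq_mul, mul_sum, zero_add, nsmul_eq_mul, mul_one]
  rw [sum_comm]
  refine sum_congr rfl fun i _ ↦ ?_
  rw [sum_comm]
  refine sum_congr rfl fun j _ ↦ ?_
  have hS := Nat.factorial_mul_stirlingSecond_eq_fwdDiff_iter (R := R) j m
  simp only [fwdDiff_iter_eq_sum_shift, zsmul_eq_mul, zero_add, nsmul_eq_mul, mul_one] at hS
  calc _ = (-1) ^ (n + i) * (Nat.stirlingFirst n i * i.choose j : R) * a ^ j * b ^ (i - j) *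
        (m.factorial * Nat.stirlingSecond j m) := by ring
    _ = _ := by
      rw [hS, mul_sum]
      exact sum_congr rfl fun k _ ↦ by ring

theorem factorial_mul_gchoose {R : Type*} [CommRing R] [Algebra ℚ R] (x : R) (n : ℕ) :
    n.factorial * gchoose x n = (descPochhammer R n).eval x := by
  rw [gchoose, descPochhammer_eval_eq_prod_range, ← mul_assoc, ← map_natCast (algebraMap ℚ R),
    ← map_mul, mul_inv_cancel₀ (by positivity), map_one, one_mul]

theorem gchoose_eq_choose {K : Type*} [Field K] [CharZero K] [Algebra ℚ K] (x : K) (n : ℕ) :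
    gchoose x n = Ring.choose x n := by
  rw [Ring.choose_eq_smul, ← aeval_eq_smeval, aeval_def, ← eval_map, descPochhammer_map,
    ← factorial_mul_gchoose, smul_eq_mul,
    inv_mul_cancel_left₀ (Nat.cast_ne_zero.2 n.factorial_ne_zero)]

theorem gchoose_add_eq_sum {K : Type*} [Field K] [CharZero K] [Algebra ℚ K] (x y : K) (n : ℕ) :
    gchoose (x + y) n = ∑ s ∈ range (n + 1), gchoose x s * gchoose y (n - s) := by
  simp only [gchoose_eq_choose, Ring.add_choose_eq n (Commute.all x y),
    Nat.sum_antidiagonal_eq_sum_range_succ (fun i j ↦ Ring.choose x i * Ring.choose y j)]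

theorem gchoose_natCast {K : Type*} [Field K] [CharZero K] [Algebra ℚ K] (k n : ℕ) :
    gchoose (k : K) n = k.choose n := by
  rw [gchoose_eq_choose, Ring.choose_natCast]

theorem sum_neg_one_pow_mul_choose_mul_choose_two_mul (m s : ℕ) :
    ∑ k ∈ range (m + 1), (-1 : ℤ) ^ (m - k) * m.choose k * (2 * k).choose s =
      if m ≤ s then 2 ^ (2 * m - s) * (m.choose (s - m) : ℤ) else 0 := by
  have h : ∑ k ∈ range (m + 1), (X + 1) ^ (2 * k) * C ((-1 : ℤ) ^ (m - k) * m.choose k) =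
      X ^ m * (X + C 2) ^ m := by
    have : (X + 1) ^ 2 + (-1) = (X * (X + C 2) : ℤ[X]) := by rw [C_ofNat]; ring
    rw [← mul_pow, ← this, add_pow]
    refine sum_congr rfl fun k _ ↦ ?_
    simp only [pow_mul, map_mul, map_pow, map_neg, map_one, map_natCast, mul_assoc]
  have hcoeff := congrArg (coeff · s) h
  simp only [finsetSum_coeff, coeff_mul_C, coeff_X_add_one_pow, coeff_X_pow_mul',
    coeff_X_add_C_pow] at hcoeff
  calc _ = ∑ k ∈ range (m + 1), ((2 * k).choose s : ℤ) * ((-1) ^ (m - k) * m.choose k) :=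
        sum_congr rfl fun k _ ↦ by ring
    _ = _ := by
      rw [hcoeff]
      split_ifs
      · rw [show m - (s - m) = 2 * m - s by omega]
      · rfl

theorem two_pow_two_mul_sub_mul_choose {K : Type*} [Field K] [CharZero K] {m s : ℕ}
    (hms : m ≤ s) :
    (2 : K) ^ (2 * m - s) * m.choose (s - m) = 2 ^ m * (m.choose (s - m) * 2 ^ ((m : ℤ) - s)) := by
  rcases le_or_gt s (2 * m) with hs | hs
  · rw [← zpow_natCast, Nat.cast_sub hs, mul_left_comm, ← zpow_natCast 2 m,
      ← zpow_add₀ two_ne_zero]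
    push_cast
    ring_nf
  · simp [Nat.choose_eq_zero_of_lt (show m < s - m by omega)]

theorem fwdDiff_iter_gchoose_two_mul_add {K : Type*} [Field K] [CharZero K] [Algebra ℚ K]
    (m n : ℕ) (l : K) :
    Δ_[1] ^[m] (fun x ↦ gchoose (2 * x + l) n) 0 =
      2 ^ m * ∑ s ∈ Icc m n, gchoose l (n - s) * m.choose (s - m) * 2 ^ ((m : ℤ) - s) := by
  have hV (k : ℕ) : gchoose (2 * (k : K) + l) n =
      ∑ s ∈ range (n + 1), gchoose l (n - s) * (2 * k).choose s := by
    rw [gchoose_add_eq_sum]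
    exact sum_congr rfl fun s _ ↦ by rw [← gchoose_natCast]; push_cast; ring
  have hK (s : ℕ) : ∑ k ∈ range (m + 1), ((-1 : ℤ) ^ (m - k) * m.choose k : ℤ) *
      (gchoose l (n - s) * (2 * k).choose s) = gchoose l (n - s) *
      ((∑ k ∈ range (m + 1), (-1 : ℤ) ^ (m - k) * m.choose k * (2 * k).choose s : ℤ) : K) := by
    push_cast
    rw [mul_sum]
    exact sum_congr rfl fun k _ ↦ by ring
  have hIcc : (range (n + 1)).filter (m ≤ ·) = Icc m n := by ext; simp; omega
  simp only [fwdDiff_iter_eq_sum_shift, zero_add, nsmul_eq_mul, mul_one, zsmul_eq_mul, hV, mul_sum]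
  rw [sum_comm]
  simp only [hK, sum_neg_one_pow_mul_choose_mul_choose_two_mul, apply_ite (Int.cast : ℤ → K),
    Int.cast_zero, mul_ite, mul_zero, ← sum_filter, hIcc]
  exact sum_congr rfl fun s hs ↦ by
    push_cast
    rw [mul_assoc, two_pow_two_mul_sub_mul_choose (mem_Icc.1 hs).1]
    ring

theorem sum_range_sum_range_eq_sum_Icc_sum_Icc {M : Type*} [AddCommMonoid M] {f : ℕ → ℕ → M}
    (m n : ℕ) (hf : ∀ i j, j < m → f i j = 0) :
    ∑ i ∈ range (n + 1), ∑ j ∈ range (i + 1), f i j = ∑ i ∈ Icc m n, ∑ j ∈ Icc m i, f i j := by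
  have hj (i : ℕ) : ∑ j ∈ range (i + 1), f i j = ∑ j ∈ Icc m i, f i j := by
    refine (sum_subset (fun j hj ↦ ?_) fun j hj hj' ↦ hf i j ?_).symm
    · simp at hj ⊢; omega
    · simp at hj hj'; omega
  simp only [hj]
  refine (sum_subset (fun i hi ↦ ?_) fun i hi hi' ↦ ?_).symm
  · simp at hi ⊢; omega
  · rw [Icc_eq_empty (by simp at hi hi'; omega), sum_empty]

theorem two_pow_mul_sum_Icc_stirling_eq_sum_range {R : Type*} [CommRing R] (m n : ℕ) (l : R) :
    2 ^ m * ∑ i ∈ Icc m n, ∑ j ∈ Icc m i, (-1 : R) ^ (m + i) * Nat.stirlingFirst n i *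
        i.choose j * Nat.stirlingSecond j m * l ^ (i - j) * 2 ^ (j - m) =
      (-1) ^ (m + n) * ∑ i ∈ range (n + 1), ∑ j ∈ range (i + 1), (-1) ^ (n + i) *
        (Nat.stirlingFirst n i * i.choose j * Nat.stirlingSecond j m : R) * 2 ^ j * l ^ (i - j) := by
  have hsign (i : ℕ) : (-1 : R) ^ (m + i) = (-1) ^ (m + n) * (-1) ^ (n + i) := by
    rw [← pow_add, show m + n + (n + i) = m + i + 2 * n by ring, pow_add _ (m + i), pow_mul,
      neg_one_sq, one_pow, mul_one]
  rw [sum_range_sum_range_eq_sum_Icc_sum_Icc m n fun i j hj ↦ by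
    simp [Nat.stirlingSecond_eq_zero_of_lt hj], mul_sum, mul_sum]
  refine sum_congr rfl fun i _ ↦ ?_
  rw [mul_sum, mul_sum]
  refine sum_congr rfl fun j hj ↦ ?_
  rw [hsign, ← Nat.add_sub_cancel' (mem_Icc.1 hj).1, pow_add 2 m, Nat.add_sub_cancel_left]
  ring

theorem stmt16_general (m n : ℕ) (l : ℚ) :
    ∑ i ∈ Finset.Icc m n, ∑ j ∈ Finset.Icc m i,
        (-1 : ℚ) ^ (m + i) * stirling1 n i * i.choose j * stirling2 j m *
          l ^ (i - j) * 2 ^ (j - m) =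
      (n.factorial : ℚ) / m.factorial * (-1 : ℚ) ^ (m + n) *
        ∑ x ∈ Finset.Icc m n, gchoose l (n - x) * m.choose (x - m) *
          (2 : ℚ) ^ ((m : ℤ) - x) := by
  rw [stirling1_eq_stirlingFirst, stirling2_eq_stirlingSecond]
  have hdesc : (fun x : ℚ ↦ (descPochhammer ℚ n).eval (2 * x + l)) =
      (n.factorial : ℚ) • fun x ↦ gchoose (2 * x + l) n :=
    funext fun x ↦ (factorial_mul_gchoose _ n).symm
  have hdiff := factorial_mul_sum_stirlingFirst_stirlingSecond_eq_fwdDiff_iter n m (2 : ℚ) l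
  rw [hdesc, fwdDiff_iter_const_smul, Pi.smul_apply, smul_eq_mul,
    fwdDiff_iter_gchoose_two_mul_add] at hdiff
  have hreindex := two_pow_mul_sum_Icc_stirling_eq_sum_range m n l
  rw [div_mul_eq_mul_div, div_mul_eq_mul_div, eq_div_iff (by positivity)]
  refine mul_left_cancel₀ (pow_ne_zero m two_ne_zero) ?_
  linear_combination (m.factorial : ℚ) * hreindex + (-1) ^ (m + n) * hdiff

theorem stmt16 (m n : ℕ) (hm : 1 ≤ m) (hmn : m ≤ n) (l : ℚ) :
    ∑ i ∈ Finset.Icc m n, ∑ j ∈ Finset.Icc m i,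
        (-1 : ℚ) ^ (m + i) * stirling1 n i * i.choose j * stirling2 j m *
          l ^ (i - j) * 2 ^ (j - m) =
      (n.factorial : ℚ) / m.factorial * (-1 : ℚ) ^ (m + n) *
        ∑ x ∈ Finset.Icc m n, gchoose l (n - x) * m.choose (x - m) *
          (2 : ℚ) ^ ((m : ℤ) - x) :=
  stmt16_general m n l
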